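/- Let g be a finite-dimensional real Lie algebra with Drinfel'd double D(g) = g × g*, let {e_i} be a basis of g with dual basis {e^i}, and set r := Σ_i (0,e^i) ⊗ (e_i,0) ∈ D(g) ⊗ D(g). Define δ_D(Z) := (ad_Z⊗id + id⊗ad_Z)(r) for Z ∈ D(g), with ad taken in D(g). Then for all X ∈ g, δ_D((X,0)) = −(j⊗j)(δ(X)), where j : g → D(g), X ↦ (X,0); and for all α ∈ g*, δ_D((0,α)) = (j'⊗j')(δ'(α)), where j' : g* → D(g), α ↦ (0,α), and δ'(α) ∈ g*⊗g* is the element determined by δ'(α)(X⊗Y) = α([X,Y]) for all X,Y ∈ g. In particular δ_D maps g × {0} into (g×{0})⊗(g×{0}) and {0} × g* into ({0}×g*)⊗({0}×g*), so g is a sub-Lie bialgebra of its double. -/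

import Mathlib

/-!
The r-matrix is `r = (j' ⊗ j) c` for the canonical element `c = Σᵢ eⁱ ⊗ eᵢ` of `g* ⊗ g`, which
corresponds to the identity of `g`; hence `(f* ⊗ id) c = (id ⊗ f) c` for every endomorphism `f`.
Expanding `(ad_Z ⊗ id + id ⊗ ad_Z) r` with the double bracket, this invariance for `f = ad_X`
(resp. `f = a(α, ·)`, whose transpose is `[α, ·]_*`) cancels the mixed `g* ⊗ g` terms. What
remains for `Z = (X, 0)` is `Σᵢ a(eⁱ, X) ⊗ eᵢ`, the flip of `δ(X)`, i.e. `-δ(X)` by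
antisymmetry of `[·,·]_*`; for `Z = (0, α)` it is `Σᵢ eⁱ ⊗ α ∘ ad_{eᵢ}`, whose value on
`X ⊗ Y` is `α([X, Y])`.
-/

open TensorProduct

namespace Module.Basis

variable {R M N ι κ : Type*} [CommRing R] [AddCommGroup M] [Module R M] [AddCommGroup N]
  [Module R N]

theorem tensorProduct_repr_apply (b : Basis ι R M) (c : Basis κ R N) (t : M ⊗[R] N)
    (i : ι) (j : κ) :
    (b.tensorProduct c).repr t (i, j) = TensorProduct.lid R R (map (b.coord i) (c.coord j) t) := by
  induction t using TensorProduct.induction_on with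
  | zero => simp
  | tmul m n => simp [mul_comm]
  | add t u ht hu => simp [ht, hu]

theorem tensorProduct_ext (b : Basis ι R M) (c : Basis κ R N) {t u : M ⊗[R] N}
    (h : ∀ i j, TensorProduct.lid R R (map (b.coord i) (c.coord j) t)
      = TensorProduct.lid R R (map (b.coord i) (c.coord j) u)) :
    t = u :=
  (b.tensorProduct c).ext_elem fun ⟨i, j⟩ => by
    rw [tensorProduct_repr_apply, tensorProduct_repr_apply, h]

variable [Fintype ι] [Fintype κ]

theorem sum_coord_comp_tmul_eq_sum_coord_tmul [DecidableEq ι] (b : Basis ι R M)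
    (c : Basis κ R N) (f : M →ₗ[R] N) :
    ∑ j, (c.coord j ∘ₗ f) ⊗ₜ[R] c j = ∑ i, b.coord i ⊗ₜ[R] f (b i) := by
  apply (dualTensorHomEquivOfBasis (N := N) b).injective
  ext x
  simp only [dualTensorHomEquivOfBasis_apply, map_sum, dualTensorHom_apply, LinearMap.coe_sum,
    Finset.sum_apply, LinearMap.comp_apply, coord_apply, c.sum_repr]
  conv_lhs => rw [← b.sum_repr x]
  simp only [map_sum, map_smul]

theorem dualBasis_coord [DecidableEq ι] (b : Basis ι R M) (i : ι) :
    b.dualBasis.coord i = Dual.eval R M (b i) :=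
  LinearMap.ext fun l => b.dualBasis_repr l i

theorem sum_coord_tmul_eq_of_eval [DecidableEq ι] [DecidableEq κ] (b : Basis ι R M)
    (c : Basis κ R N) (B : M → Dual R N) {t : Dual R M ⊗[R] Dual R N}
    (ht : ∀ x y, TensorProduct.lid R R (map (Dual.eval R M x) (Dual.eval R N y) t) = B x y) :
    ∑ i, b.coord i ⊗ₜ[R] B (b i) = t := by
  refine tensorProduct_ext b.dualBasis c.dualBasis fun i j => ?_
  simp [dualBasis_coord, ht, Finsupp.single_apply]

end Module.Basis

namespace DrinfeldDouble

variable {R g ι : Type*} [CommRing R] [LieRing g] [LieAlgebra R g] [Fintype ι] [DecidableEq ι]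

def coboundary {A : Type*} [AddCommGroup A] [Module R A] (bracket : A →ₗ[R] A →ₗ[R] A)
    (r : A ⊗[R] A) (Z : A) : A ⊗[R] A :=
  (map (bracket Z) (LinearMap.id : A →ₗ[R] A) + map (LinearMap.id : A →ₗ[R] A) (bracket Z)) r

theorem coboundary_sum_tmul {A κ : Type*} [AddCommGroup A] [Module R A]
    (bracket : A →ₗ[R] A →ₗ[R] A) (s : Finset κ) (x y : κ → A) (Z : A) :
    coboundary bracket (∑ i ∈ s, x i ⊗ₜ[R] y i) Z
      = ∑ i ∈ s, (bracket Z (x i) ⊗ₜ y i + x i ⊗ₜ bracket Z (y i)) := by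
  simp [coboundary, Finset.sum_add_distrib]

def IsDoubleBracket (br : Module.Dual R g →ₗ[R] Module.Dual R g →ₗ[R] Module.Dual R g)
    (a : Module.Dual R g →ₗ[R] g →ₗ[R] g)
    (Dbr : (g × Module.Dual R g) →ₗ[R] (g × Module.Dual R g) →ₗ[R] (g × Module.Dual R g)) :
    Prop :=
  ∀ (X Y : g) (α β : Module.Dual R g),
    Dbr (X, α) (Y, β) =
      (⁅X, Y⁆ + a β X - a α Y,
        br α β + α ∘ₗ (LieAlgebra.ad R g Y : g →ₗ[R] g) - β ∘ₗ (LieAlgebra.ad R g X : g →ₗ[R] g))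

theorem sum_action_dualBasis_tmul_eq_neg {M : Type*} [AddCommGroup M] [Module R M]
    (e : Module.Basis ι R M) {br : Module.Dual R M →ₗ[R] Module.Dual R M →ₗ[R] Module.Dual R M}
    (br_alt : br.IsAlt) {δ : M →ₗ[R] M ⊗[R] M}
    (hδ : ∀ (X : M) (α β : Module.Dual R M), TensorProduct.lid R R (map α β (δ X)) = br α β X)
    {a : Module.Dual R M →ₗ[R] M →ₗ[R] M} (ha : ∀ α X β, β (a α X) = br α β X) (X : M) :
    ∑ i, a (e.dualBasis i) X ⊗ₜ[R] e i = -δ X := by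
  refine e.tensorProduct_ext e fun j k => ?_
  simp only [Module.Basis.coe_dualBasis, map_sum, map_tmul, Module.Basis.coord_apply,
    Module.Basis.repr_self, Finsupp.single_apply, lid_tmul, smul_eq_mul, mul_ite, mul_one,
    mul_zero, Finset.sum_ite_eq', Finset.mem_univ, if_true, map_neg]
  rw [← e.coord_apply, ha, hδ, ← br_alt.neg, LinearMap.neg_apply]

theorem coboundary_inl (e : Module.Basis ι R g)
    {br : Module.Dual R g →ₗ[R] Module.Dual R g →ₗ[R] Module.Dual R g} (br_alt : br.IsAlt)
    {δ : g →ₗ[R] g ⊗[R] g}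
    (hδ : ∀ (X : g) (α β : Module.Dual R g), TensorProduct.lid R R (map α β (δ X)) = br α β X)
    {a : Module.Dual R g →ₗ[R] g →ₗ[R] g} (ha : ∀ α X β, β (a α X) = br α β X)
    {Dbr : (g × Module.Dual R g) →ₗ[R] (g × Module.Dual R g) →ₗ[R] (g × Module.Dual R g)}
    (hDbr : IsDoubleBracket br a Dbr) (X : g) :
    coboundary Dbr (∑ i, ((0 : g), e.dualBasis i) ⊗ₜ[R] (e i, (0 : Module.Dual R g))) (X, 0)
      = -map (LinearMap.inl R g (Module.Dual R g)) (LinearMap.inl R g (Module.Dual R g)) (δ X) := by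
  have hcan : ∑ i, ((0 : g), e.dualBasis i) ⊗ₜ[R] (⁅X, e i⁆, (0 : Module.Dual R g))
      = ∑ i, ((0 : g), e.dualBasis i ∘ₗ (LieAlgebra.ad R g X : g →ₗ[R] g))
          ⊗ₜ[R] (e i, (0 : Module.Dual R g)) := by
    simpa [map_sum] using congrArg
      (map (LinearMap.inr R g (Module.Dual R g)) (LinearMap.inl R g (Module.Dual R g)))
      (e.sum_coord_comp_tmul_eq_sum_coord_tmul e (LieAlgebra.ad R g X)).symm
  suffices h : coboundary Dbr (∑ i, ((0 : g), e.dualBasis i) ⊗ₜ[R] (e i, (0 : Module.Dual R g)))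
      (X, 0) = map (LinearMap.inl R g (Module.Dual R g)) (LinearMap.inl R g (Module.Dual R g))
        (∑ i, a (e.dualBasis i) X ⊗ₜ[R] e i) by
    rw [h, sum_action_dualBasis_tmul_eq_neg e br_alt hδ ha X, map_neg]
  have hbracket : ∀ Y, Dbr (X, 0) (Y, 0) = (⁅X, Y⁆, 0) := fun Y => by rw [hDbr]; simp
  simp only [coboundary_sum_tmul, Finset.sum_add_distrib, hbracket, hcan]
  rw [← Finset.sum_add_distrib]
  simp only [map_sum, map_tmul, ← add_tmul]
  refine Finset.sum_congr rfl fun i _ => ?_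
  rw [hDbr]
  simp

theorem coboundary_inr (e : Module.Basis ι R g)
    {br : Module.Dual R g →ₗ[R] Module.Dual R g →ₗ[R] Module.Dual R g}
    {a : Module.Dual R g →ₗ[R] g →ₗ[R] g} (ha : ∀ α X β, β (a α X) = br α β X)
    {Dbr : (g × Module.Dual R g) →ₗ[R] (g × Module.Dual R g) →ₗ[R] (g × Module.Dual R g)}
    (hDbr : IsDoubleBracket br a Dbr)
    {δ' : Module.Dual R g →ₗ[R] Module.Dual R g ⊗[R] Module.Dual R g}
    (hδ' : ∀ (α : Module.Dual R g) (X Y : g),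
      TensorProduct.lid R R (map (Module.Dual.eval R g X) (Module.Dual.eval R g Y) (δ' α))
        = α ⁅X, Y⁆)
    (α : Module.Dual R g) :
    coboundary Dbr (∑ i, ((0 : g), e.dualBasis i) ⊗ₜ[R] (e i, (0 : Module.Dual R g))) (0, α)
      = map (LinearMap.inr R g (Module.Dual R g)) (LinearMap.inr R g (Module.Dual R g)) (δ' α) := by
  have hbr : ∀ β, br α β = β ∘ₗ a α := fun β => LinearMap.ext fun X => (ha α X β).symm
  have hcan : ∑ i, ((0 : g), br α (e.dualBasis i)) ⊗ₜ[R] (e i, (0 : Module.Dual R g))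
      = ∑ i, ((0 : g), e.dualBasis i) ⊗ₜ[R] (a α (e i), (0 : Module.Dual R g)) := by
    simpa [map_sum, hbr] using congrArg
      (map (LinearMap.inr R g (Module.Dual R g)) (LinearMap.inl R g (Module.Dual R g)))
      (e.sum_coord_comp_tmul_eq_sum_coord_tmul e (a α))
  have hδ'_eq : ∑ i, e.dualBasis i ⊗ₜ[R] (α ∘ₗ (LieAlgebra.ad R g (e i) : g →ₗ[R] g)) = δ' α := by
    simpa using e.sum_coord_tmul_eq_of_eval e (fun X => α ∘ₗ (LieAlgebra.ad R g X : g →ₗ[R] g))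
      (hδ' α)
  have hbracket : ∀ β, Dbr (0, α) (0, β) = (0, br α β) := fun β => by rw [hDbr]; simp
  rw [← hδ'_eq]
  simp only [coboundary_sum_tmul, Finset.sum_add_distrib, hbracket, hcan]
  rw [← Finset.sum_add_distrib]
  simp only [map_sum, map_tmul, ← tmul_add]
  refine Finset.sum_congr rfl fun i _ => ?_
  rw [hDbr]
  simp

end DrinfeldDouble

theorem double_canonical_r_matrix_cocommutator
    (g : Type*) [LieRing g] [LieAlgebra ℝ g]
    (br : Module.Dual ℝ g →ₗ[ℝ] Module.Dual ℝ g →ₗ[ℝ] Module.Dual ℝ g)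
    (br_alt : ∀ α : Module.Dual ℝ g, br α α = 0)
    (δ : g →ₗ[ℝ] g ⊗[ℝ] g)
    (hδ : ∀ (X : g) (α β : Module.Dual ℝ g),
      TensorProduct.lid ℝ ℝ (TensorProduct.map α β (δ X)) = br α β X)
    (a : Module.Dual ℝ g →ₗ[ℝ] g →ₗ[ℝ] g)
    (ha : ∀ (α : Module.Dual ℝ g) (X : g) (β : Module.Dual ℝ g),
      β (a α X) = br α β X)
    -- the double bracket, as a bilinear map on `D(g) = g × g*`
    (Dbr : (g × Module.Dual ℝ g) →ₗ[ℝ] (g × Module.Dual ℝ g) →ₗ[ℝ] (g × Module.Dual ℝ g))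
    (hDbr : ∀ (X Y : g) (α β : Module.Dual ℝ g),
      Dbr (X, α) (Y, β) =
        (⁅X, Y⁆ + a β X - a α Y,
          br α β + α ∘ₗ (LieAlgebra.ad ℝ g Y : g →ₗ[ℝ] g)
            - β ∘ₗ (LieAlgebra.ad ℝ g X : g →ₗ[ℝ] g)))
    -- a basis of `g` and the canonical r-matrix of the double
    (ι : Type*) [Fintype ι] [DecidableEq ι] (e : Module.Basis ι ℝ g)
    (r : (g × Module.Dual ℝ g) ⊗[ℝ] (g × Module.Dual ℝ g))
    (hr : r = ∑ i : ι, (((0 : g), e.dualBasis i) : g × Module.Dual ℝ g)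
        ⊗ₜ[ℝ] ((e i, (0 : Module.Dual ℝ g)) : g × Module.Dual ℝ g))
    -- the dual cocommutator `δ'(α)(X⊗Y) = α([X,Y])`
    (δ' : Module.Dual ℝ g →ₗ[ℝ] Module.Dual ℝ g ⊗[ℝ] Module.Dual ℝ g)
    (hδ' : ∀ (α : Module.Dual ℝ g) (X Y : g),
      TensorProduct.lid ℝ ℝ (TensorProduct.map
        (Module.Dual.eval ℝ g X) (Module.Dual.eval ℝ g Y) (δ' α)) = α ⁅X, Y⁆) :
    -- δ_D on `g × {0}` is `−(j⊗j)∘δ`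
    (∀ X : g,
      (TensorProduct.map (Dbr (X, (0 : Module.Dual ℝ g)))
          (LinearMap.id : (g × Module.Dual ℝ g) →ₗ[ℝ] (g × Module.Dual ℝ g))
        + TensorProduct.map (LinearMap.id : (g × Module.Dual ℝ g) →ₗ[ℝ] (g × Module.Dual ℝ g))
          (Dbr (X, (0 : Module.Dual ℝ g)))) r
      = -(TensorProduct.map (LinearMap.inl ℝ g (Module.Dual ℝ g))
          (LinearMap.inl ℝ g (Module.Dual ℝ g)) (δ X)))
    ∧
    -- δ_D on `{0} × g*` is `(j'⊗j')∘δ'`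
    (∀ α : Module.Dual ℝ g,
      (TensorProduct.map (Dbr ((0 : g), α))
          (LinearMap.id : (g × Module.Dual ℝ g) →ₗ[ℝ] (g × Module.Dual ℝ g))
        + TensorProduct.map (LinearMap.id : (g × Module.Dual ℝ g) →ₗ[ℝ] (g × Module.Dual ℝ g))
          (Dbr ((0 : g), α))) r
      = TensorProduct.map (LinearMap.inr ℝ g (Module.Dual ℝ g))
          (LinearMap.inr ℝ g (Module.Dual ℝ g)) (δ' α))
    ∧
    -- in particular, `δ_D` maps `g×{0}` into `(g×{0})⊗(g×{0})`
    (∀ X : g,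
      (TensorProduct.map (Dbr (X, (0 : Module.Dual ℝ g)))
          (LinearMap.id : (g × Module.Dual ℝ g) →ₗ[ℝ] (g × Module.Dual ℝ g))
        + TensorProduct.map (LinearMap.id : (g × Module.Dual ℝ g) →ₗ[ℝ] (g × Module.Dual ℝ g))
          (Dbr (X, (0 : Module.Dual ℝ g)))) r
      ∈ LinearMap.range (TensorProduct.map (LinearMap.inl ℝ g (Module.Dual ℝ g))
          (LinearMap.inl ℝ g (Module.Dual ℝ g))))
    ∧
    -- and `{0}×g*` into `({0}×g*)⊗({0}×g*)`
    (∀ α : Module.Dual ℝ g,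
      (TensorProduct.map (Dbr ((0 : g), α))
          (LinearMap.id : (g × Module.Dual ℝ g) →ₗ[ℝ] (g × Module.Dual ℝ g))
        + TensorProduct.map (LinearMap.id : (g × Module.Dual ℝ g) →ₗ[ℝ] (g × Module.Dual ℝ g))
          (Dbr ((0 : g), α))) r
      ∈ LinearMap.range (TensorProduct.map (LinearMap.inr ℝ g (Module.Dual ℝ g))
          (LinearMap.inr ℝ g (Module.Dual ℝ g)))) := by
  subst hr
  have hinl := DrinfeldDouble.coboundary_inl e br_alt hδ ha hDbr
  have hinr := DrinfeldDouble.coboundary_inr e ha hDbr hδ'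
  exact ⟨hinl, hinr, fun X => ⟨-δ X, by rw [map_neg]; exact (hinl X).symm⟩,
    fun α => ⟨δ' α, (hinr α).symm⟩⟩
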